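/- Let S⁺ be the 3×3 complex spin-1 raising matrix in the basis (|+⟩, |0⟩, |−⟩) = (e₀, e₁, e₂), i.e. S⁺ has entries (S⁺)₀₁ = (S⁺)₁₂ = √2 and all other entries 0, and let S⁻ = (S⁺)ᵀ. Let h = (S⁺ ⊗ₖ S⁻) + (S⁻ ⊗ₖ S⁺) be the two-site XY kinetic operator on ℂ³ ⊗ ℂ³, realized as a 9×9 matrix indexed by Fin 3 × Fin 3 via the Kronecker product. Then h annihilates the antisymmetric bimagnon combination and both fully polarized states: h *ᵥ (e₀ ⊗ e₂ − e₂ ⊗ e₀) = 0, h *ᵥ (e₀ ⊗ e₀) = 0, and h *ᵥ (e₂ ⊗ e₂) = 0, where (v ⊗ w)(i,j) = v i * w j. This is the exact local destructive interference underlying the π-bimagnon scar tower of the spin-1 XY chain. -/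
import Mathlib


open Matrix

/-- The spin-1 raising matrix `S⁺` in the basis `(|+⟩, |0⟩, |−⟩) = (e₀, e₁, e₂)`, with entries
`(S⁺)₀₁ = (S⁺)₁₂ = √2` and all other entries `0`. -/
noncomputable def Splus : Matrix (Fin 3) (Fin 3) ℂ :=
  !![0, (Real.sqrt 2 : ℂ), 0; 0, 0, (Real.sqrt 2 : ℂ); 0, 0, 0]

/-- The spin-1 lowering matrix `S⁻ = (S⁺)ᵀ`. -/
noncomputable def Sminus : Matrix (Fin 3) (Fin 3) ℂ := Splusᵀ

/-- The two-site XY kinetic operator `h = S⁺ ⊗ₖ S⁻ + S⁻ ⊗ₖ S⁺` on `ℂ³ ⊗ ℂ³`, realized as a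
`9 × 9` matrix indexed by `Fin 3 × Fin 3` via the Kronecker product. -/
noncomputable def hXY : Matrix (Fin 3 × Fin 3) (Fin 3 × Fin 3) ℂ :=
  Matrix.kroneckerMap (· * ·) Splus Sminus + Matrix.kroneckerMap (· * ·) Sminus Splus

/-- Standard basis vectors `e₀, e₁, e₂` of `ℂ³`, representing `|+⟩, |0⟩, |−⟩`. -/
def e (i : Fin 3) : Fin 3 → ℂ := Pi.single i 1

/-- The tensor (Kronecker) product of two vectors: `(v ⊗ w)(i, j) = v i * w j`. -/
def tensorVec (v w : Fin 3 → ℂ) : Fin 3 × Fin 3 → ℂ := fun p => v p.1 * w p.2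

/-- The two-site XY kinetic operator annihilates the antisymmetric bimagnon combination
`e₀ ⊗ e₂ − e₂ ⊗ e₀` and both fully polarized states `e₀ ⊗ e₀` and `e₂ ⊗ e₂`: the exact local
destructive interference underlying the π-bimagnon scar tower of the spin-1 XY chain. -/
theorem xy_local_destructive_interference :
    hXY *ᵥ (tensorVec (e 0) (e 2) - tensorVec (e 2) (e 0)) = 0 ∧
    hXY *ᵥ tensorVec (e 0) (e 0) = 0 ∧
    hXY *ᵥ tensorVec (e 2) (e 2) = 0 := by
  refine ⟨?_, ?_, ?_⟩ <;>
  · funext p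
    obtain ⟨i, j⟩ := p
    fin_cases i <;> fin_cases j <;>
      simp [hXY, Splus, Fintype.sum_prod_type, Sminus, tensorVec, e, mulVec, dotProduct, Fin.sum_univ_succ,
        Pi.single_apply, Matrix.kroneckerMap, Matrix.transpose, Matrix.vecHead, Matrix.vecTail]
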